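/- Let P be a finite poset, g an S-labeling of P, and v ∈ P. Then (τ_v g)(v) = C · ((∇⁻¹g)(v)·(Δ⁻¹g)(v))⁻¹ · g(v) = C · ((Δ⁻¹g)(v))⁻¹ · ((∇⁻¹g)(v))⁻¹ · g(v), and (ε_v g)(v) = C · g(v) · ((∇⁻¹g)(v)·(Δ⁻¹g)(v))⁻¹ = C · g(v) · ((Δ⁻¹g)(v))⁻¹ · ((∇⁻¹g)(v))⁻¹, whenever all inverted elements are nonzero. -/
import Mathlib


/-!
Noncommutative (skew field) antichain/order toggling and rowmotion on a finite poset `P`,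
with labels in a division ring `S` and a fixed central element `C`, following
Joseph–Roby, "Birational and noncommutative lifts of antichain toggling and rowmotion".
All maps are partial; definedness ("every element inverted in the computation is
nonzero") is recorded by explicit predicates.
-/

open Finset

attribute [local instance] Classical.propDecidable

variable {P : Type*} [Fintype P] [PartialOrder P] {S : Type*} [DivisionRing S]

/-- `c` is a saturated chain in `P`: consecutive entries are covers. -/
def SatChain {P : Type*} [PartialOrder P] {k : ℕ} (c : Fin (k + 1) → P) : Prop :=
  ∀ i : Fin k, c i.castSucc ⋖ c i.succ

/-- `c` is a maximal chain of `P`: a saturated chain from a minimal element to a maximal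
element of `P` (equivalently, the restriction to `P` of a maximal chain
`0̂ ⋖ y₁ ⋖ ⋯ ⋖ y_k ⋖ 1̂` of `P̂`). -/
def MaxChain {P : Type*} [PartialOrder P] {k : ℕ} (c : Fin (k + 1) → P) : Prop :=
  SatChain c ∧ IsMin (c 0) ∧ IsMax (c (Fin.last k))

/-- `∑_{u ∈ P̂, u ⋖ v} f(u)`, with the convention `f(0̂) = 1`. -/
noncomputable def lSum (f : P → S) (v : P) : S :=
  (if IsMin v then 1 else 0) + ∑ u ∈ univ.filter (fun u => u ⋖ v), f u

/-- `∑_{u ∈ P̂, u ⋗ v} f(u)⁻¹`, with the convention `f(1̂) = C`; its inverse is the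
parallel sum `⫲_{u ∈ P̂, u ⋗ v} f(u)` (where `x ⫲ y = (x⁻¹ + y⁻¹)⁻¹`). -/
noncomputable def uInvSum (C : S) (f : P → S) (v : P) : S :=
  (if IsMax v then C⁻¹ else 0) + ∑ u ∈ univ.filter (fun u => v ⋖ u), (f u)⁻¹

/-- The noncommutative order toggle `T_v`: it replaces the label at `v` by
`(∑_{u ∈ P̂, u ⋖ v} f(u)) · f(v)⁻¹ · (⫲_{u ∈ P̂, u ⋗ v} f(u))` and fixes all other
labels. -/
noncomputable def ncT (C : S) (v : P) (f : P → S) : P → S :=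
  fun x => if x = v then lSum f v * (f v)⁻¹ * (uInvSum C f v)⁻¹ else f x

/-- The noncommutative order elggot `E_v`: it replaces the label at `v` by
`(⫲_{u ∈ P̂, u ⋗ v} f(u)) · f(v)⁻¹ · (∑_{u ∈ P̂, u ⋖ v} f(u))` and fixes all other
labels. -/
noncomputable def ncE (C : S) (v : P) (f : P → S) : P → S :=
  fun x => if x = v then (uInvSum C f v)⁻¹ * (f v)⁻¹ * lSum f v else f x

/-- Definedness of one application of `T_v` or `E_v` to `f`: every element inverted in
the computation (the label `f(v)`, the labels `f(u)` of the upper covers `u` of `v` in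
`P̂`, and the sum of their inverses) is nonzero. -/
def ncODef (C : S) (v : P) (f : P → S) : Prop :=
  f v ≠ 0 ∧ (∀ u : P, v ⋖ u → f u ≠ 0) ∧ (IsMax v → C ≠ 0) ∧ uInvSum C f v ≠ 0

/-- The element `∑ g(y_{c-1})⋯g(y₁) · g(y_k)⋯g(y_c)` inverted by the noncommutative
antichain toggle `τ_v`, summed over all maximal chains `0̂ ⋖ y₁ ⋖ ⋯ ⋖ y_k ⋖ 1̂` of `P̂`
with `y_c = v` (indices decrease by 1 within each factor). -/
noncomputable def tauDenom (g : P → S) (v : P) : S :=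
  ∑ k ∈ range (Fintype.card P),
    ∑ c ∈ univ.filter (fun c : Fin (k + 1) → P => MaxChain c),
      ∑ j ∈ univ.filter (fun j : Fin (k + 1) => c j = v),
        (((List.ofFn (g ∘ c)).take j.1).reverse).prod *
          (((List.ofFn (g ∘ c)).drop j.1).reverse).prod

/-- The element `∑ g(y_c)⋯g(y₁) · g(y_k)⋯g(y_{c+1})` inverted by the noncommutative
antichain elggot `ε_v`, summed over all maximal chains `0̂ ⋖ y₁ ⋖ ⋯ ⋖ y_k ⋖ 1̂` of `P̂`
with `y_c = v`. -/
noncomputable def epsDenom (g : P → S) (v : P) : S :=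
  ∑ k ∈ range (Fintype.card P),
    ∑ c ∈ univ.filter (fun c : Fin (k + 1) → P => MaxChain c),
      ∑ j ∈ univ.filter (fun j : Fin (k + 1) => c j = v),
        (((List.ofFn (g ∘ c)).take (j.1 + 1)).reverse).prod *
          (((List.ofFn (g ∘ c)).drop (j.1 + 1)).reverse).prod

/-- The noncommutative antichain toggle `τ_v`: it replaces the label at `v` by
`C · (∑ g(y_{c-1})⋯g(y₁) · g(y_k)⋯g(y_c))⁻¹` and fixes all other labels. -/
noncomputable def ncTau (C : S) (v : P) (g : P → S) : P → S :=
  fun x => if x = v then C * (tauDenom g v)⁻¹ else g x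

/-- The noncommutative antichain elggot `ε_v`: it replaces the label at `v` by
`C · (∑ g(y_c)⋯g(y₁) · g(y_k)⋯g(y_{c+1}))⁻¹` and fixes all other labels. -/
noncomputable def ncEps (C : S) (v : P) (g : P → S) : P → S :=
  fun x => if x = v then C * (epsDenom g v)⁻¹ else g x

/-- The noncommutative complement `Θ`: `(Θf)(x) = C · f(x)⁻¹`. -/
noncomputable def ncTheta (C : S) (f : P → S) : P → S := fun x => C * (f x)⁻¹

/-- The noncommutative down transfer `∇`:
`(∇f)(x) = f(x) · (∑_{y ∈ P̂, y ⋖ x} f(y))⁻¹` with `f(0̂) = 1`. -/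
noncomputable def ncNabla (f : P → S) : P → S := fun x => f x * (lSum f x)⁻¹

/-- The noncommutative inverse up transfer `Δ⁻¹`:
`(Δ⁻¹f)(x) = ∑ f(y_k)⋯f(y₂)f(y₁)` over all saturated chains
`x = y₁ ⋖ y₂ ⋖ ⋯ ⋖ y_k ⋖ 1̂` in `P̂`. -/
noncomputable def ncDeltaInv (f : P → S) : P → S := fun x =>
  ∑ k ∈ range (Fintype.card P),
    ∑ c ∈ univ.filter (fun c : Fin (k + 1) → P =>
        SatChain c ∧ c 0 = x ∧ IsMax (c (Fin.last k))),
      ((List.ofFn (f ∘ c)).reverse).prod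

/-- The noncommutative inverse down transfer `∇⁻¹`:
`(∇⁻¹f)(x) = ∑ f(y_k)⋯f(y₂)f(y₁)` over all saturated chains
`0̂ ⋖ y₁ ⋖ y₂ ⋖ ⋯ ⋖ y_k = x` in `P̂`. -/
noncomputable def ncNablaInv (f : P → S) : P → S := fun x =>
  ∑ k ∈ range (Fintype.card P),
    ∑ c ∈ univ.filter (fun c : Fin (k + 1) → P =>
        SatChain c ∧ IsMin (c 0) ∧ c (Fin.last k) = x),
      ((List.ofFn (f ∘ c)).reverse).prod

/-- `l` is a linear extension of `P`: it lists every element of `P` exactly once, and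
`l[i] < l[j]` in `P` implies `i < j`. -/
def IsLinearExtension {P : Type*} [PartialOrder P] (l : List P) : Prop :=
  l.Nodup ∧ (∀ x : P, x ∈ l) ∧
    ∀ (i j : ℕ) (hi : i < l.length) (hj : j < l.length), l[i]'hi < l[j]'hj → i < j

/-- `l` is a linear extension of the subposet `A` of `P`. -/
def IsLinearExtensionOn {P : Type*} [PartialOrder P] (A : Set P) (l : List P) : Prop :=
  l.Nodup ∧ (∀ x : P, x ∈ l ↔ x ∈ A) ∧
    ∀ (i j : ℕ) (hi : i < l.length) (hj : j < l.length), l[i]'hi < l[j]'hj → i < j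
section AuxNC

variable {P : Type*} [Fintype P] [PartialOrder P] {S : Type*} [DivisionRing S]

theorem SatChain.strictMono' {k : ℕ} {c : Fin (k + 1) → P} (h : SatChain c) :
    StrictMono c :=
  Fin.strictMono_iff_lt_succ.mpr fun i => (h i).lt

theorem SatChain.lt_card {k : ℕ} {c : Fin (k + 1) → P} (h : SatChain c) :
    k < Fintype.card P := by
  have := Fintype.card_le_of_injective c h.strictMono'.injective
  simpa using this

/-- Glue two chains overlapping in one point. -/
def glueChain {α : Type*} {k₁ k₂ : ℕ} (c₁ : Fin (k₁ + 1) → α) (c₂ : Fin (k₂ + 1) → α) :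
    Fin (k₁ + k₂ + 1) → α := fun i =>
  if h : i.1 ≤ k₁ then c₁ ⟨i.1, by omega⟩ else c₂ ⟨i.1 - k₁, by have := i.isLt; omega⟩

theorem glueChain_low {α : Type*} {k₁ k₂ : ℕ} (c₁ : Fin (k₁ + 1) → α) (c₂ : Fin (k₂ + 1) → α)
    {i : Fin (k₁ + k₂ + 1)} (h : i.1 ≤ k₁) :
    glueChain c₁ c₂ i = c₁ ⟨i.1, by omega⟩ := dif_pos h

theorem glueChain_high {α : Type*} {k₁ k₂ : ℕ} {c₁ : Fin (k₁ + 1) → α} {c₂ : Fin (k₂ + 1) → α}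
    (hmid : c₁ (Fin.last k₁) = c₂ 0) {i : Fin (k₁ + k₂ + 1)} (h : k₁ ≤ i.1) :
    glueChain c₁ c₂ i = c₂ ⟨i.1 - k₁, by have := i.isLt; omega⟩ := by
  by_cases h2 : i.1 ≤ k₁
  · have h3 : i.1 = k₁ := le_antisymm h2 h
    rw [glueChain_low _ _ h2]
    have e1 : (⟨i.1, by omega⟩ : Fin (k₁ + 1)) = Fin.last k₁ := by
      apply Fin.ext; simpa using h3
    rw [e1, hmid]
    congr 1
    apply Fin.ext
    simp [h3]
  · exact dif_neg h2

theorem SatChain.glue {k₁ k₂ : ℕ} {c₁ : Fin (k₁ + 1) → P} {c₂ : Fin (k₂ + 1) → P}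
    (h₁ : SatChain c₁) (h₂ : SatChain c₂) (hmid : c₁ (Fin.last k₁) = c₂ 0) :
    SatChain (glueChain c₁ c₂) := by
  intro i
  by_cases h : i.1 + 1 ≤ k₁
  · rw [glueChain_low c₁ c₂ (show (Fin.castSucc i).1 ≤ k₁ by simp; omega),
      glueChain_low c₁ c₂ (show (Fin.succ i).1 ≤ k₁ by simp; omega)]
    exact h₁ ⟨i.1, by omega⟩
  · rw [glueChain_high hmid (show k₁ ≤ (Fin.castSucc i).1 by simp; omega),
      glueChain_high hmid (show k₁ ≤ (Fin.succ i).1 by simp; omega)]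
    have h5 := h₂ ⟨i.1 - k₁, by have := i.isLt; omega⟩
    convert h5 using 2 <;> (apply Fin.ext; simp) <;> omega

theorem glueChain_zero {α : Type*} {k₁ k₂ : ℕ} (c₁ : Fin (k₁ + 1) → α) (c₂ : Fin (k₂ + 1) → α) :
    glueChain c₁ c₂ 0 = c₁ 0 := by
  rw [glueChain_low c₁ c₂ (by simp)]
  congr 1

theorem glueChain_last {α : Type*} {k₁ k₂ : ℕ} {c₁ : Fin (k₁ + 1) → α} {c₂ : Fin (k₂ + 1) → α}
    (hmid : c₁ (Fin.last k₁) = c₂ 0) :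
    glueChain c₁ c₂ (Fin.last (k₁ + k₂)) = c₂ (Fin.last k₂) := by
  rw [glueChain_high hmid (by simp)]
  congr 1
  apply Fin.ext
  simp

theorem glueChain_mid {α : Type*} {k₁ k₂ : ℕ} (c₁ : Fin (k₁ + 1) → α) (c₂ : Fin (k₂ + 1) → α) :
    glueChain c₁ c₂ ⟨k₁, by omega⟩ = c₁ (Fin.last k₁) := by
  rw [glueChain_low c₁ c₂ le_rfl]
  congr 1

end AuxNC
section AuxNC2
set_option linter.unusedSectionVars false

variable {P : Type*} [Fintype P] [PartialOrder P] {S : Type*} [DivisionRing S]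

theorem ofFn_comp_take {α β : Type*} {k₁ k₂ : ℕ} (g : α → β)
    (c₁ : Fin (k₁ + 1) → α) (c₂ : Fin (k₂ + 1) → α) :
    List.ofFn (g ∘ c₁) = (List.ofFn (g ∘ glueChain c₁ c₂)).take (k₁ + 1) := by
  apply List.ext_getElem
  · simp only [List.length_take, List.length_ofFn]; omega
  · intro i h1 h2
    simp only [List.getElem_take, List.getElem_ofFn, Function.comp_apply]
    rw [glueChain_low c₁ c₂ (show i ≤ k₁ by simp only [List.length_ofFn] at h1; omega)]

theorem ofFn_comp_drop {α β : Type*} {k₁ k₂ : ℕ} (g : α → β)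
    {c₁ : Fin (k₁ + 1) → α} {c₂ : Fin (k₂ + 1) → α} (hmid : c₁ (Fin.last k₁) = c₂ 0) :
    List.ofFn (g ∘ c₂) = (List.ofFn (g ∘ glueChain c₁ c₂)).drop k₁ := by
  apply List.ext_getElem
  · simp only [List.length_drop, List.length_ofFn]; omega
  · intro i h1 h2
    simp only [List.getElem_drop, List.getElem_ofFn, Function.comp_apply]
    rw [glueChain_high hmid (Nat.le_add_right _ _)]
    congr 2
    apply Fin.ext
    show i = k₁ + i - k₁
    omega

theorem chainSigma_ext {α : Type*} {k k' : ℕ} {c : Fin (k + 1) → α} {c' : Fin (k' + 1) → α}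
    (h : k = k')
    (hc : ∀ (i : ℕ) (h1 : i < k + 1) (h2 : i < k' + 1), c ⟨i, h1⟩ = c' ⟨i, h2⟩) :
    (⟨k, c⟩ : Σ m : ℕ, Fin (m + 1) → α) = ⟨k', c'⟩ := by
  subst h
  obtain rfl : c = c' := funext fun i => hc i.1 i.isLt i.isLt
  rfl

theorem tripleSigma_ext {α : Type*} {k k' : ℕ} {c : Fin (k + 1) → α} {c' : Fin (k' + 1) → α}
    {j : Fin (k + 1)} {j' : Fin (k' + 1)} (h : k = k')
    (hc : ∀ (i : ℕ) (h1 : i < k + 1) (h2 : i < k' + 1), c ⟨i, h1⟩ = c' ⟨i, h2⟩)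
    (hj : j.1 = j'.1) :
    (⟨k, c, j⟩ : Σ m : ℕ, Σ _c : Fin (m + 1) → α, Fin (m + 1)) = ⟨k', c', j'⟩ := by
  subst h
  obtain rfl : c = c' := funext fun i => hc i.1 i.isLt i.isLt
  obtain rfl : j = j' := Fin.ext hj
  rfl

end AuxNC2
section AuxNC3
set_option linter.unusedSectionVars false

variable {P : Type*} [Fintype P] [PartialOrder P] {S : Type*} [DivisionRing S]

theorem key_eq (g : P → S) (v : P) :
    ncNablaInv g v * ncDeltaInv g v =
      ∑ k ∈ range (Fintype.card P),
        ∑ c ∈ univ.filter (fun c : Fin (k + 1) → P => MaxChain c),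
          ∑ j ∈ univ.filter (fun j : Fin (k + 1) => c j = v),
            (((List.ofFn (g ∘ c)).take (j.1 + 1)).reverse).prod *
              (((List.ofFn (g ∘ c)).drop j.1).reverse).prod := by
  classical
  have hmain :
      (∑ x ∈ (((range (Fintype.card P)).sigma fun k =>
            univ.filter fun c : Fin (k + 1) → P =>
              SatChain c ∧ IsMin (c 0) ∧ c (Fin.last k) = v) ×ˢ
          ((range (Fintype.card P)).sigma fun k =>
            univ.filter fun c : Fin (k + 1) → P =>
              SatChain c ∧ c 0 = v ∧ IsMax (c (Fin.last k)))),
          (List.ofFn (g ∘ x.1.2)).reverse.prod * (List.ofFn (g ∘ x.2.2)).reverse.prod) =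
      ∑ y ∈ (range (Fintype.card P)).sigma (fun k =>
          (univ.filter fun c : Fin (k + 1) → P => MaxChain c).sigma fun c =>
            univ.filter fun j : Fin (k + 1) => c j = v),
        (((List.ofFn (g ∘ y.2.1)).take (y.2.2.1 + 1)).reverse).prod *
          (((List.ofFn (g ∘ y.2.1)).drop y.2.2.1).reverse).prod := by
    refine Finset.sum_nbij'
      (fun x => ⟨x.1.1 + x.2.1, ⟨glueChain x.1.2 x.2.2, ⟨x.1.1, by omega⟩⟩⟩)
      (fun y => (⟨y.2.2.1, fun i => y.2.1 ⟨i.1, by have := i.isLt; have := y.2.2.isLt; omega⟩⟩,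
        ⟨y.1 - y.2.2.1, fun i => y.2.1 ⟨y.2.2.1 + i.1,
          by have := i.isLt; have := y.2.2.isLt; omega⟩⟩))
      ?_ ?_ ?_ ?_ ?_
    · -- maps into target
      rintro ⟨⟨k₁, c₁⟩, ⟨k₂, c₂⟩⟩ hx
      dsimp only
      simp only [Finset.mem_product, Finset.mem_sigma, Finset.mem_filter, Finset.mem_univ,
        Finset.mem_range, true_and] at hx ⊢
      obtain ⟨⟨hk₁, hc₁, hmin, hv₁⟩, hk₂, hc₂, hv₂, hmax⟩ := hx
      have hmid : c₁ (Fin.last k₁) = c₂ 0 := by rw [hv₁, hv₂]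
      have hglue : SatChain (glueChain c₁ c₂) := hc₁.glue hc₂ hmid
      refine ⟨hglue.lt_card, ⟨hglue, ?_, ?_⟩, ?_⟩
      · rw [glueChain_zero]; exact hmin
      · rw [glueChain_last hmid]; exact hmax
      · rw [glueChain_mid]; exact hv₁
    · -- maps back
      rintro ⟨k, c, j⟩ hy
      dsimp only
      simp only [Finset.mem_sigma, Finset.mem_filter, Finset.mem_univ, Finset.mem_range,
        true_and, Finset.mem_product] at hy ⊢
      obtain ⟨hk, ⟨hc, hmin, hmax⟩, hj⟩ := hy
      have hjk : j.1 ≤ k := by have := j.isLt; omega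
      refine ⟨⟨by omega, ?_, ?_, ?_⟩, by omega, ?_, ?_, ?_⟩
      · intro i
        exact hc ⟨i.1, by have := i.isLt; omega⟩
      · have e0 : (⟨(0 : Fin (j.1 + 1)).1, by omega⟩ : Fin (k + 1)) = 0 := by
          apply Fin.ext; simp
        rw [e0]; exact hmin
      · have el : (⟨(Fin.last j.1).1, by have := j.isLt; omega⟩ : Fin (k + 1)) = j := by
          apply Fin.ext; simp
        rw [el]; exact hj
      · intro i
        exact hc ⟨j.1 + i.1, by have := i.isLt; omega⟩
      · have e0 : (⟨j.1 + (0 : Fin (k - j.1 + 1)).1, by omega⟩ : Fin (k + 1)) = j := by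
          apply Fin.ext; simp
        rw [e0]; exact hj
      · have el : (⟨j.1 + (Fin.last (k - j.1)).1, by omega⟩ : Fin (k + 1)) = Fin.last k := by
          apply Fin.ext; simp; omega
        rw [el]; exact hmax
    · -- left inverse
      rintro ⟨⟨k₁, c₁⟩, ⟨k₂, c₂⟩⟩ hx
      dsimp only
      simp only [Finset.mem_product, Finset.mem_sigma, Finset.mem_filter, Finset.mem_univ,
        Finset.mem_range, true_and] at hx
      obtain ⟨⟨hk₁, hc₁, hmin, hv₁⟩, hk₂, hc₂, hv₂, hmax⟩ := hx
      have hmid : c₁ (Fin.last k₁) = c₂ 0 := by rw [hv₁, hv₂]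
      rw [Prod.mk.injEq]
      constructor
      · refine chainSigma_ext rfl fun i h1 h2 => ?_
        exact glueChain_low c₁ c₂ (show i ≤ k₁ by omega)
      · refine chainSigma_ext (by omega) fun i h1 h2 => ?_
        have e2 : glueChain c₁ c₂ ⟨k₁ + i, by omega⟩ = c₂ ⟨k₁ + i - k₁, by omega⟩ :=
          glueChain_high hmid (Nat.le_add_right _ _)
        refine Eq.trans (show _ = c₂ ⟨k₁ + i - k₁, by omega⟩ from e2) ?_
        congr 1
        apply Fin.ext
        show k₁ + i - k₁ = i
        omega
    · -- right inverse
      rintro ⟨k, c, j⟩ hy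
      dsimp only
      simp only [Finset.mem_sigma, Finset.mem_filter, Finset.mem_univ, Finset.mem_range,
        true_and] at hy
      have hjk : j.1 ≤ k := by have := j.isLt; omega
      refine tripleSigma_ext (by omega) (fun i h1 h2 => ?_) rfl
      by_cases hij : i ≤ j.1
      · exact glueChain_low _ _ (show i ≤ j.1 from hij)
      · refine Eq.trans (glueChain_high ?_ (show j.1 ≤ i by omega)) ?_
        · show c ⟨j.1, by omega⟩ = c ⟨j.1 + 0, by omega⟩
          congr 1
        · show c ⟨j.1 + (i - j.1), by omega⟩ = c ⟨i, h2⟩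
          congr 1
          apply Fin.ext
          show j.1 + (i - j.1) = i
          omega
    · -- summand equality
      rintro ⟨⟨k₁, c₁⟩, ⟨k₂, c₂⟩⟩ hx
      dsimp only
      simp only [Finset.mem_product, Finset.mem_sigma, Finset.mem_filter, Finset.mem_univ,
        Finset.mem_range, true_and] at hx
      obtain ⟨⟨hk₁, hc₁, hmin, hv₁⟩, hk₂, hc₂, hv₂, hmax⟩ := hx
      have hmid : c₁ (Fin.last k₁) = c₂ 0 := by rw [hv₁, hv₂]
      rw [← ofFn_comp_take g c₁ c₂, ← ofFn_comp_drop g hmid]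
  calc ncNablaInv g v * ncDeltaInv g v
      = ∑ x ∈ (((range (Fintype.card P)).sigma fun k =>
            univ.filter fun c : Fin (k + 1) → P =>
              SatChain c ∧ IsMin (c 0) ∧ c (Fin.last k) = v) ×ˢ
          ((range (Fintype.card P)).sigma fun k =>
            univ.filter fun c : Fin (k + 1) → P =>
              SatChain c ∧ c 0 = v ∧ IsMax (c (Fin.last k)))),
          (List.ofFn (g ∘ x.1.2)).reverse.prod * (List.ofFn (g ∘ x.2.2)).reverse.prod := by
        rw [ncNablaInv, ncDeltaInv]
        rw [Finset.sum_sigma', Finset.sum_sigma', Finset.sum_mul_sum, Finset.sum_product]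
    _ = _ := by
        rw [hmain, Finset.sum_sigma]
        refine Finset.sum_congr rfl fun k hk => ?_
        rw [Finset.sum_sigma]

end AuxNC3
section AuxNC4
set_option linter.unusedSectionVars false

variable {P : Type*} [Fintype P] [PartialOrder P] {S : Type*} [DivisionRing S]

theorem tau_aux (g : P → S) (v : P) :
    g v * tauDenom g v = ncNablaInv g v * ncDeltaInv g v := by
  rw [key_eq, tauDenom, Finset.mul_sum]
  refine Finset.sum_congr rfl fun k _ => ?_
  rw [Finset.mul_sum]
  refine Finset.sum_congr rfl fun c _ => ?_
  rw [Finset.mul_sum]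
  refine Finset.sum_congr rfl fun j hj => ?_
  simp only [Finset.mem_filter, Finset.mem_univ, true_and] at hj
  have hlen : j.1 < (List.ofFn (g ∘ c)).length := by
    simp only [List.length_ofFn]; exact j.isLt
  rw [List.take_succ, List.getElem?_eq_getElem hlen, Option.toList_some,
    List.reverse_append, List.reverse_singleton, List.singleton_append, List.prod_cons,
    List.getElem_ofFn]
  have : c ⟨j.1, by simpa using hlen⟩ = v := by
    rw [show (⟨j.1, by simpa using hlen⟩ : Fin (k + 1)) = j from Fin.ext rfl, hj]
  rw [Function.comp_apply, this, mul_assoc]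

theorem eps_aux (g : P → S) (v : P) :
    epsDenom g v * g v = ncNablaInv g v * ncDeltaInv g v := by
  rw [key_eq, epsDenom, Finset.sum_mul]
  refine Finset.sum_congr rfl fun k _ => ?_
  rw [Finset.sum_mul]
  refine Finset.sum_congr rfl fun c _ => ?_
  rw [Finset.sum_mul]
  refine Finset.sum_congr rfl fun j hj => ?_
  simp only [Finset.mem_filter, Finset.mem_univ, true_and] at hj
  have hlen : j.1 < (List.ofFn (g ∘ c)).length := by
    simp only [List.length_ofFn]; exact j.isLt
  rw [List.drop_eq_getElem_cons hlen, List.reverse_cons, List.prod_append,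
    List.prod_singleton, List.getElem_ofFn]
  have : c ⟨j.1, by simpa using hlen⟩ = v := by
    rw [show (⟨j.1, by simpa using hlen⟩ : Fin (k + 1)) = j from Fin.ext rfl, hj]
  rw [Function.comp_apply, this, mul_assoc]

end AuxNC4

/-- For `v ∈ P` and an `S`-labeling `g`,
`(τ_v g)(v) = C · ((∇⁻¹g)(v)·(Δ⁻¹g)(v))⁻¹ · g(v) = C · ((Δ⁻¹g)(v))⁻¹ · ((∇⁻¹g)(v))⁻¹ · g(v)`
and
`(ε_v g)(v) = C · g(v) · ((∇⁻¹g)(v)·(Δ⁻¹g)(v))⁻¹ = C · g(v) · ((Δ⁻¹g)(v))⁻¹ · ((∇⁻¹g)(v))⁻¹`,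
whenever all inverted elements are nonzero. -/
theorem ncTau_ncEps_apply_eq (C : S) (hC : ∀ s : S, C * s = s * C) (v : P) (g : P → S)
    (h1 : tauDenom g v ≠ 0) (h2 : epsDenom g v ≠ 0)
    (h3 : ncNablaInv g v ≠ 0) (h4 : ncDeltaInv g v ≠ 0) :
    ncTau C v g v = C * (ncNablaInv g v * ncDeltaInv g v)⁻¹ * g v ∧
    ncTau C v g v = C * (ncDeltaInv g v)⁻¹ * (ncNablaInv g v)⁻¹ * g v ∧
    ncEps C v g v = C * g v * (ncNablaInv g v * ncDeltaInv g v)⁻¹ ∧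
    ncEps C v g v = C * g v * (ncDeltaInv g v)⁻¹ * (ncNablaInv g v)⁻¹ := by
  have hND : ncNablaInv g v * ncDeltaInv g v ≠ 0 := mul_ne_zero h3 h4
  have htau := tau_aux g v
  have heps := eps_aux g v
  have hg : g v ≠ 0 := by
    intro h
    rw [h, zero_mul] at htau
    exact hND htau.symm
  have htd : tauDenom g v = (g v)⁻¹ * (ncNablaInv g v * ncDeltaInv g v) := by
    rw [← htau, ← mul_assoc, inv_mul_cancel₀ hg, one_mul]
  have hed : epsDenom g v = (ncNablaInv g v * ncDeltaInv g v) * (g v)⁻¹ := by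
    rw [← heps, mul_assoc, mul_inv_cancel₀ hg, mul_one]
  have e1 : ncTau C v g v = C * (ncNablaInv g v * ncDeltaInv g v)⁻¹ * g v := by
    simp only [ncTau, eq_self_iff_true, if_true]
    rw [htd, mul_inv_rev, inv_inv, mul_assoc]
  have e3 : ncEps C v g v = C * g v * (ncNablaInv g v * ncDeltaInv g v)⁻¹ := by
    simp only [ncEps, eq_self_iff_true, if_true]
    rw [hed, mul_inv_rev, inv_inv, mul_assoc]
  refine ⟨e1, ?_, e3, ?_⟩
  · rw [e1, mul_inv_rev, ← mul_assoc]
  · rw [e3, mul_inv_rev, ← mul_assoc]
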